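/- arXiv:1801.05246 — 3 statements merged into one kernel-verified Lean document; each statement's English description precedes it below -/
import Mathlib

section
/- Let G be a connected simple graph on V vertices with E edges and first Betti number β = E - V + 1. For any eigenvector f of L(G) that is nowhere zero, the number of nodal domains ν(f) (connected components of the graph obtained from G by deleting all edges (i,j) with f(i)f(j) < 0) and the flip count μ(f) = #{(i,j) ∈ E : f(i)f(j) < 0} satisfy μ(f) ≥ ν(f) - 1 and μ(f) ≤ ν(f) - 1 + β. -/
/-- The graph obtained from `G` by deleting all edges across which `f` changes sign
(for nowhere-zero `f`, the surviving edges are exactly those with `f x * f y > 0`).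
Its connected components are the nodal domains of `f`. -/
def signGraph {α : Type*} (G : SimpleGraph α) (f : α → ℝ) : SimpleGraph α where
  Adj x y := G.Adj x y ∧ 0 < f x * f y
  symm := ⟨fun x y h => ⟨h.1.symm, by rw [mul_comm]; exact h.2⟩⟩
  loopless := ⟨fun x h => G.loopless.irrefl x h.1⟩

/-- The nodal count `ν(f)`: the number of connected components after deleting all
sign-change edges. -/
noncomputable def nodalCount {α : Type*} (G : SimpleGraph α) (f : α → ℝ) : ℕ :=
  Nat.card (signGraph G f).ConnectedComponent

open scoped Classical in
/-- The flip count `μ(f)`: the number of (undirected) edges of `G` across which `f`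
changes sign. -/
noncomputable def flipCount {α : Type*} [Fintype α] (G : SimpleGraph α) (f : α → ℝ) : ℕ :=
  (G.edgeFinset.filter
    (fun e => Sym2.lift ⟨fun x y => f x * f y < 0, fun x y => by simp [mul_comm]⟩ e)).card

/-!
Deleting one edge raises the number of connected components by at most one. Deleting the `μ`
sign-change edges from the connected graph `G` leaves exactly the nodal domains, so `ν ≤ μ + 1`.
Deleting the remaining `E - μ` edges as well leaves `V` isolated vertices, so `V ≤ ν + E - μ`.
-/

open Finset

namespace SimpleGraph

variable {V : Type*}

theorem Walk.reachable_or_of_deleteEdges_le {G G' : SimpleGraph V} {x y u v : V}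
    (hG' : G.deleteEdges {s(x, y)} ≤ G') (w : G.Walk u v) :
    G'.Reachable u v ∨ G'.Reachable u x ∧ G'.Reachable y v ∨
      G'.Reachable u y ∧ G'.Reachable x v := by
  induction w with
  | nil => exact Or.inl .rfl
  | @cons a b c hab p ih =>
    by_cases he : s(a, b) = s(x, y)
    · rcases Sym2.eq_iff.mp he with ⟨rfl, rfl⟩ | ⟨rfl, rfl⟩
      · rcases ih with h | ⟨-, h⟩ | ⟨-, h⟩
        exacts [Or.inr (Or.inl ⟨.rfl, h⟩), Or.inr (Or.inl ⟨.rfl, h⟩), Or.inl h]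
      · rcases ih with h | ⟨-, h⟩ | ⟨-, h⟩
        exacts [Or.inr (Or.inr ⟨.rfl, h⟩), Or.inl h, Or.inr (Or.inr ⟨.rfl, h⟩)]
    · have hr : G'.Reachable a b := (hG' ((deleteEdges_adj ..).mpr ⟨hab, he⟩)).reachable
      rcases ih with h | ⟨h₁, h₂⟩ | ⟨h₁, h₂⟩
      exacts [Or.inl (hr.trans h), Or.inr (Or.inl ⟨hr.trans h₁, h₂⟩),
        Or.inr (Or.inr ⟨hr.trans h₁, h₂⟩)]

/-- Away from the component of `y`, deleting the edge `s(x, y)` does not split components, so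
sending that component to `none` embeds the new components into `Option G.ConnectedComponent`. -/
theorem card_connectedComponent_deleteEdges_singleton_le [Finite V] (G : SimpleGraph V)
    (e : Sym2 V) :
    Nat.card (G.deleteEdges {e}).ConnectedComponent ≤ Nat.card G.ConnectedComponent + 1 := by
  classical
  induction e using Sym2.ind with
  | _ x y =>
  set G' := G.deleteEdges {s(x, y)}
  let F : G'.ConnectedComponent → Option G.ConnectedComponent := fun c =>
    if c = G'.connectedComponentMk y then none else some (c.map (Hom.ofLE (deleteEdges_le _)))
  have hF : Function.Injective F := by
    refine ConnectedComponent.ind₂ fun u v huv => ?_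
    by_cases hu : G'.connectedComponentMk u = G'.connectedComponentMk y <;>
      by_cases hv : G'.connectedComponentMk v = G'.connectedComponentMk y <;>
      simp only [F, hu, hv, if_true, if_false, reduceCtorEq, Option.some_inj] at huv ⊢
    obtain ⟨w⟩ := ConnectedComponent.eq.mp huv
    rw [ConnectedComponent.eq] at hu hv ⊢
    rcases w.reachable_or_of_deleteEdges_le le_rfl with h | ⟨-, h⟩ | ⟨h, -⟩
    exacts [h, absurd h.symm hv, absurd h hu]
  calc Nat.card G'.ConnectedComponent ≤ Nat.card (Option G.ConnectedComponent) :=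
        Nat.card_le_card_of_injective F hF
    _ = Nat.card G.ConnectedComponent + 1 := Finite.card_option

theorem card_connectedComponent_deleteEdges_le [Finite V] (G : SimpleGraph V)
    (s : Finset (Sym2 V)) :
    Nat.card (G.deleteEdges s).ConnectedComponent ≤ Nat.card G.ConnectedComponent + #s := by
  classical
  induction s using Finset.induction_on with
  | empty => simp
  | @insert e s he ih =>
    have hdel : G.deleteEdges ↑(insert e s) = (G.deleteEdges s).deleteEdges {e} := by
      rw [deleteEdges_deleteEdges, coe_insert, Set.insert_eq, Set.union_comm]
    rw [hdel, card_insert_of_notMem he]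
    have := card_connectedComponent_deleteEdges_singleton_le (G.deleteEdges s) e
    omega

theorem card_le_card_connectedComponent_add_card_edgeSet [Finite V] (G : SimpleGraph V) :
    Nat.card V ≤ Nat.card G.ConnectedComponent + Nat.card G.edgeSet := by
  have := Fintype.ofFinite G.edgeSet
  have hbot : G.deleteEdges ↑G.edgeSet.toFinset = ⊥ := by simp
  have hmk : Function.Injective (⊥ : SimpleGraph V).connectedComponentMk := fun _ _ h =>
    reachable_bot.mp (ConnectedComponent.eq.mp h)
  calc Nat.card V ≤ Nat.card (⊥ : SimpleGraph V).ConnectedComponent :=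
        Nat.card_le_card_of_injective _ hmk
    _ ≤ Nat.card G.ConnectedComponent + #G.edgeSet.toFinset :=
        hbot ▸ G.card_connectedComponent_deleteEdges_le _
    _ = Nat.card G.ConnectedComponent + Nat.card G.edgeSet := by
        rw [Nat.card_eq_card_toFinset]

end SimpleGraph

open SimpleGraph

section Nodal

variable {α : Type*} [Fintype α] {G : SimpleGraph α} {f : α → ℝ}

open scoped Classical in
noncomputable def flipEdges (G : SimpleGraph α) (f : α → ℝ) : Finset (Sym2 α) :=
  G.edgeFinset.filter
    (fun e => Sym2.lift ⟨fun x y => f x * f y < 0, fun x y => by simp [mul_comm]⟩ e)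

theorem flipCount_eq_card_flipEdges : flipCount G f = #(flipEdges G f) := rfl

theorem coe_flipEdges_subset_edgeSet : (flipEdges G f : Set (Sym2 α)) ⊆ G.edgeSet := by
  classical exact fun _ he => mem_edgeFinset.mp (mem_filter.mp he).1

theorem signGraph_eq_deleteEdges_flipEdges (hnz : ∀ i, f i ≠ 0) :
    signGraph G f = G.deleteEdges (flipEdges G f) := by
  ext x y
  simp only [signGraph, deleteEdges_adj, flipEdges, coe_filter, Set.mem_ofPred_eq, mem_edgeFinset,
    mem_edgeSet, Sym2.lift_mk, not_and, not_lt]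
  exact and_congr_right fun hxy =>
    ⟨fun h _ => h.le, fun h => (h hxy).lt_of_ne (mul_ne_zero (hnz x) (hnz y)).symm⟩

theorem nodalCount_le_flipCount_add_one (hconn : G.Connected) (hnz : ∀ i, f i ≠ 0) :
    nodalCount G f ≤ flipCount G f + 1 := by
  have : Subsingleton G.ConnectedComponent := hconn.preconnected.subsingleton_connectedComponent
  have hG : Nat.card G.ConnectedComponent ≤ 1 := Finite.card_le_one_iff_subsingleton.mpr this
  have := G.card_connectedComponent_deleteEdges_le (flipEdges G f)
  rw [nodalCount, signGraph_eq_deleteEdges_flipEdges hnz, flipCount_eq_card_flipEdges]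
  omega

theorem card_edgeSet_signGraph_add_flipCount [DecidableEq α] [DecidableRel G.Adj]
    (hnz : ∀ i, f i ≠ 0) :
    Nat.card (signGraph G f).edgeSet + flipCount G f = #G.edgeFinset := by
  rw [signGraph_eq_deleteEdges_flipEdges hnz, edgeSet_deleteEdges, Nat.card_coe_set_eq,
    flipCount_eq_card_flipEdges, ← Set.ncard_coe_finset (flipEdges G f),
    Set.ncard_sdiff_add_ncard_of_subset coe_flipEdges_subset_edgeSet (Set.toFinite _),
    ← coe_edgeFinset, Set.ncard_coe_finset]

end Nodal

open scoped Classical in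
theorem flip_count_nodal_count_bounds_general
    {α : Type*} [Fintype α] [DecidableEq α] (G : SimpleGraph α) [DecidableRel G.Adj]
    (hconn : G.Connected)
    (f : α → ℝ)
    (hnz : ∀ i, f i ≠ 0) :
    (nodalCount G f : ℤ) - 1 ≤ (flipCount G f : ℤ) ∧
    (flipCount G f : ℤ) ≤ (nodalCount G f : ℤ) - 1 +
      ((G.edgeFinset.card : ℤ) - (Fintype.card α : ℤ) + 1) := by
  have hlower := nodalCount_le_flipCount_add_one hconn hnz
  have hvertices := (signGraph G f).card_le_card_connectedComponent_add_card_edgeSet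
  have hedges := card_edgeSet_signGraph_add_flipCount (G := G) hnz
  rw [Nat.card_eq_fintype_card, ← nodalCount] at hvertices
  omega

open scoped Classical in
/-- For a connected simple graph `G` with first Betti number
`β = E - V + 1` and any nowhere-zero Laplacian eigenvector `f`, the flip count and
nodal count satisfy `ν(f) - 1 ≤ μ(f) ≤ ν(f) - 1 + β`. -/
theorem flip_count_nodal_count_bounds
    {α : Type*} [Fintype α] [DecidableEq α] (G : SimpleGraph α) [DecidableRel G.Adj]
    (hconn : G.Connected)
    (f : α → ℝ) (hf : f ≠ 0) (lam : ℝ)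
    (heig : (G.lapMatrix ℝ).mulVec f = lam • f)
    (hnz : ∀ i, f i ≠ 0) :
    (nodalCount G f : ℤ) - 1 ≤ (flipCount G f : ℤ) ∧
    (flipCount G f : ℤ) ≤ (nodalCount G f : ℤ) - 1 +
      ((G.edgeFinset.card : ℤ) - (Fintype.card α : ℤ) + 1) :=
  flip_count_nodal_count_bounds_general G hconn f hnz
end

section
/- Let G be a simple graph with a 1-leaf-pair a, b adjacent to u, let Ḡ be obtained by adding edge (a,b), and let f be an eigenvector of L(G) with simple eigenvalue λ ∉ {1,3} and f nowhere zero. Then the flip count of f on Ḡ equals the flip count of f on G: f does not change sign across the added edge (a,b). -/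
/-- The real graph Laplacian `D - A`, with classical decidability of adjacency. -/
noncomputable def lapR {α : Type*} [Fintype α] [DecidableEq α] (G : SimpleGraph α) :
    Matrix α α ℝ :=
  letI := Classical.decRel G.Adj
  G.lapMatrix ℝ

namespace SimpleGraph

variable {V R : Type*} [Fintype V] [DecidableEq V] (G : SimpleGraph V) [DecidableRel G.Adj]

theorem lapMatrix_mulVec_apply_of_adj_iff_eq [NonAssocRing R] {v u : V}
    (hv : ∀ w, G.Adj v w ↔ w = u) (x : V → R) :
    (G.lapMatrix R).mulVec x v = x v - x u := by
  have hnbr : G.neighborFinset v = {u} := by ext w; simp [hv w]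
  rw [lapMatrix_mulVec_apply, hnbr, ← card_neighborFinset_eq_degree, hnbr]
  simp

/-- Each leaf `v` at `u` satisfies `(1 - λ) * x v = x u`, so `λ ≠ 1` pins `x v` down. -/
theorem eigenvector_apply_eq_of_twin_leaves [Ring R] [NoZeroDivisors R] {a b u : V}
    (ha : ∀ w, G.Adj a w ↔ w = u) (hb : ∀ w, G.Adj b w ↔ w = u)
    {x : V → R} {lam : R} (hlam : lam ≠ 1) (heig : (G.lapMatrix R).mulVec x = lam • x) :
    x a = x b := by
  have hxa := congrFun heig a
  have hxb := congrFun heig b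
  rw [lapMatrix_mulVec_apply_of_adj_iff_eq G ha, Pi.smul_apply, smul_eq_mul] at hxa
  rw [lapMatrix_mulVec_apply_of_adj_iff_eq G hb, Pi.smul_apply, smul_eq_mul] at hxb
  have hdiff : (1 - lam) * (x a - x b) = 0 := by
    rw [mul_sub, sub_mul, sub_mul, one_mul, one_mul, ← hxa, ← hxb]
    abel
  exact sub_eq_zero.1 ((mul_eq_zero.1 hdiff).resolve_left (sub_ne_zero.2 hlam.symm))

end SimpleGraph

theorem flipCount_sup_fromEdgeSet_of_not_mul_neg {α : Type*} [Fintype α]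
    (G : SimpleGraph α) (f : α → ℝ) {a b : α} (hab : ¬ f a * f b < 0) :
    flipCount (G ⊔ SimpleGraph.fromEdgeSet {s(a, b)}) f = flipCount G f := by
  unfold flipCount
  congr 1
  ext e
  simp only [Finset.mem_filter, SimpleGraph.mem_edgeFinset, SimpleGraph.edgeSet_sup,
    SimpleGraph.edgeSet_fromEdgeSet, Set.mem_union, Set.mem_sdiff, Set.mem_singleton_iff]
  constructor
  · rintro ⟨he | ⟨rfl, -⟩, hflip⟩
    · exact ⟨he, hflip⟩
    · exact absurd hflip hab
  · rintro ⟨he, hflip⟩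
    exact ⟨Or.inl he, hflip⟩

theorem flip_count_invariant_under_leaf_edge_insertion_general
    {α : Type*} [Fintype α] [DecidableEq α] (G : SimpleGraph α) [DecidableRel G.Adj]
    (a b u : α)
    (ha : ∀ v, G.Adj a v ↔ v = u) (hb : ∀ v, G.Adj b v ↔ v = u)
    (f : α → ℝ) (lam : ℝ) (hlam1 : lam ≠ 1)
    (heig : (G.lapMatrix ℝ).mulVec f = lam • f) :
    flipCount (G ⊔ SimpleGraph.fromEdgeSet {s(a, b)}) f = flipCount G f ∧
    ¬ (f a * f b < 0) := by
  have hfab : f a = f b := G.eigenvector_apply_eq_of_twin_leaves ha hb hlam1 heig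
  have hnoflip : ¬ (f a * f b < 0) := by
    rw [← hfab]
    exact not_lt.2 (mul_self_nonneg (f a))
  exact ⟨flipCount_sup_fromEdgeSet_of_not_mul_neg G f hnoflip, hnoflip⟩

/-- If `a`, `b` form a 1-leaf-pair attached to `u` in `G`, `Ḡ` adds the
edge `(a,b)`, and `f` is a nowhere-zero eigenvector of `L(G)` with simple eigenvalue
`lam ∉ {1, 3}`, then the flip count of `f` on `Ḡ` equals that on `G`: `f` does not
change sign across the added edge. -/
theorem flip_count_invariant_under_leaf_edge_insertion
    {α : Type*} [Fintype α] [DecidableEq α] (G : SimpleGraph α) [DecidableRel G.Adj]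
    (a b u : α) (hab : a ≠ b)
    (ha : ∀ v, G.Adj a v ↔ v = u) (hb : ∀ v, G.Adj b v ↔ v = u)
    (f : α → ℝ) (hnz : ∀ i, f i ≠ 0) (lam : ℝ) (hlam1 : lam ≠ 1) (hlam3 : lam ≠ 3)
    (heig : (G.lapMatrix ℝ).mulVec f = lam • f)
    (hsimple : ∀ g : α → ℝ, (G.lapMatrix ℝ).mulVec g = lam • g → ∃ c : ℝ, g = c • f) :
    flipCount (G ⊔ SimpleGraph.fromEdgeSet {s(a, b)}) f = flipCount G f ∧
    ¬ (f a * f b < 0) :=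
  flip_count_invariant_under_leaf_edge_insertion_general G a b u ha hb f lam hlam1 heig
end

section
/- Let G be a simple graph with a 1-leaf-pair a, b adjacent to u, Ḡ the graph with edge (a,b) added, and f an eigenvector of L(G) with simple eigenvalue λ < 1, f nowhere zero, and f(a) = f(b). Then the number of nodal domains of f on Ḡ equals the number of nodal domains of f on G. -/
namespace SimpleGraph

variable {V : Type*}

theorem ConnectedComponent.map_ofLE_bijective {G G' : SimpleGraph V} (h : G ≤ G')
    (hadj : ∀ ⦃x y⦄, G'.Adj x y → G.Reachable x y) :
    (ConnectedComponent.map (Hom.ofLE h)).Bijective := by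
  refine ⟨?_, ConnectedComponent.surjective_map_ofLE h⟩
  rintro ⟨x⟩ ⟨y⟩ hxy
  obtain ⟨w⟩ : G'.Reachable x y := ConnectedComponent.exact hxy
  clear hxy
  refine ConnectedComponent.sound ?_
  induction w with
  | nil => rfl
  | cons hx _ ih => exact (hadj hx).trans ih

theorem card_connectedComponent_eq_of_le_of_le_sup_edge {G G' : SimpleGraph V} {a b : V}
    (hle : G ≤ G') (hle' : G' ≤ G ⊔ edge a b) (hab : G.Reachable a b) :
    Nat.card G'.ConnectedComponent = Nat.card G.ConnectedComponent := by
  refine (Nat.card_eq_of_bijective _ (ConnectedComponent.map_ofLE_bijective hle ?_)).symm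
  intro x y hxy
  rcases hle' hxy with hG | hedge
  · exact hG.reachable
  · rcases ((edge_adj a b x y).1 hedge).1 with ⟨rfl, rfl⟩ | ⟨rfl, rfl⟩
    · exact hab
    · exact hab.symm

theorem lapMatrix_mulVec_apply_of_leaf {R : Type*} [NonAssocRing R] [Fintype V]
    [DecidableEq V] {G : SimpleGraph V} [DecidableRel G.Adj] {a u : V}
    (ha : ∀ v, G.Adj a v ↔ v = u) (f : V → R) :
    (G.lapMatrix R).mulVec f a = f a - f u := by
  have hN : G.neighborFinset a = {u} := by ext v; simp [ha]
  rw [lapMatrix_mulVec_apply, hN, degree, hN]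
  simp

end SimpleGraph

open SimpleGraph

theorem signGraph_mono {α : Type*} {G G' : SimpleGraph α} (h : G ≤ G') (f : α → ℝ) :
    signGraph G f ≤ signGraph G' f :=
  fun _ _ hxy => ⟨h hxy.1, hxy.2⟩

theorem signGraph_sup_edge_le {α : Type*} (G : SimpleGraph α) (f : α → ℝ) (a b : α) :
    signGraph (G ⊔ edge a b) f ≤ signGraph G f ⊔ edge a b := by
  rintro x y ⟨hG | hedge, hpos⟩
  · exact Or.inl ⟨hG, hpos⟩
  · exact Or.inr hedge

theorem nodalCount_sup_edge_of_reachable {α : Type*} (G : SimpleGraph α) (f : α → ℝ)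
    {a b : α} (hab : (signGraph G f).Reachable a b) :
    nodalCount (G ⊔ edge a b) f = nodalCount G f :=
  card_connectedComponent_eq_of_le_of_le_sup_edge (signGraph_mono le_sup_left f)
    (signGraph_sup_edge_le G f a b) hab

/-- The eigen-equation at the leaf `a` reads `f u = (1 - lam) f a`. -/
theorem signGraph_adj_leaf_of_eigenvalue_lt_one {α : Type*} [Fintype α] [DecidableEq α]
    {G : SimpleGraph α} [DecidableRel G.Adj] {a u : α} (ha : ∀ v, G.Adj a v ↔ v = u)
    {f : α → ℝ} (hfa : f a ≠ 0) {lam : ℝ} (hlam : lam < 1)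
    (heig : (G.lapMatrix ℝ).mulVec f = lam • f) :
    (signGraph G f).Adj a u := by
  have hfu : f u = (1 - lam) * f a := by
    have := congrFun heig a
    rw [lapMatrix_mulVec_apply_of_leaf ha, Pi.smul_apply, smul_eq_mul] at this
    linarith
  refine ⟨(ha u).2 rfl, ?_⟩
  rw [hfu, mul_left_comm]
  exact mul_pos (by linarith) (mul_self_pos.2 hfa)

theorem nodal_count_invariant_under_leaf_edge_insertion_general
    {α : Type*} [Fintype α] [DecidableEq α] (G : SimpleGraph α) [DecidableRel G.Adj]
    (a b u : α)
    (ha : ∀ v, G.Adj a v ↔ v = u) (hb : ∀ v, G.Adj b v ↔ v = u)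
    (f : α → ℝ) (hnz : ∀ i, f i ≠ 0) (lam : ℝ) (hlam : lam < 1)
    (heig : (G.lapMatrix ℝ).mulVec f = lam • f) :
    nodalCount (G ⊔ SimpleGraph.fromEdgeSet {s(a, b)}) f = nodalCount G f :=
  nodalCount_sup_edge_of_reachable G f <|
    (signGraph_adj_leaf_of_eigenvalue_lt_one ha (hnz a) hlam heig).reachable.trans
      (signGraph_adj_leaf_of_eigenvalue_lt_one hb (hnz b) hlam heig).reachable.symm

/-- If `a`, `b` form a 1-leaf-pair attached to `u` in `G`, `Ḡ` adds the
edge `(a,b)`, and `f` is a nowhere-zero eigenvector of `L(G)` with simple eigenvalue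
`lam < 1` and `f a = f b`, then the nodal count of `f` on `Ḡ` equals that on `G`. -/
theorem nodal_count_invariant_under_leaf_edge_insertion
    {α : Type*} [Fintype α] [DecidableEq α] (G : SimpleGraph α) [DecidableRel G.Adj]
    (a b u : α) (hab : a ≠ b)
    (ha : ∀ v, G.Adj a v ↔ v = u) (hb : ∀ v, G.Adj b v ↔ v = u)
    (f : α → ℝ) (hnz : ∀ i, f i ≠ 0) (lam : ℝ) (hlam : lam < 1)
    (heig : (G.lapMatrix ℝ).mulVec f = lam • f)
    (hsimple : ∀ g : α → ℝ, (G.lapMatrix ℝ).mulVec g = lam • g → ∃ c : ℝ, g = c • f)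
    (hsym : f a = f b) :
    nodalCount (G ⊔ SimpleGraph.fromEdgeSet {s(a, b)}) f = nodalCount G f :=
  nodal_count_invariant_under_leaf_edge_insertion_general G a b u ha hb f hnz lam hlam heig
end
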